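/- arXiv:2212.02042 — 4 statements merged into one kernel-verified Lean document; each statement's English description precedes it below -/
import Mathlib

section
/- For every measurable function D : X → ℝ with 0 < D(x) < 1 for μ-almost every x, such that p·log(1−D) and q·log D are μ-integrable, one has (1/2)·∫ [p·log(1−D) + q·log D] dμ + log 2 ≤ JS(p, q). -/
open MeasureTheory

lemma gibbs_aux (a s t : ℝ) (ha : 0 ≤ a) (hs : 0 < s) (ht : 0 < t) :
    a * Real.log t ≤ a * Real.log (a / s) + (t * s - a) := by
  rcases eq_or_lt_of_le ha with h | h
  · simp only [← h, zero_mul, zero_add, sub_zero]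
    positivity
  · have hx : 0 < t * s / a := by positivity
    have hlog := Real.log_le_sub_one_of_pos hx
    have hrw : Real.log (t * s / a) = Real.log t - Real.log (a / s) := by
      rw [Real.log_div (by positivity) (ne_of_gt h), Real.log_mul (ne_of_gt ht) (ne_of_gt hs),
        Real.log_div (ne_of_gt h) (ne_of_gt hs)]
      ring
    rw [hrw] at hlog
    have := mul_le_mul_of_nonneg_left hlog ha
    have hne : a ≠ 0 := ne_of_gt h
    calc a * Real.log t = a * Real.log (a / s) + a * (Real.log t - Real.log (a / s)) := by ring
      _ ≤ a * Real.log (a / s) + a * (t * s / a - 1) := by linarith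
      _ = a * Real.log (a / s) + (t * s - a) := by field_simp

lemma log2_split (a s : ℝ) (ha : 0 ≤ a) (hs : 0 < s) :
    a * Real.log (2 * a / s) = a * Real.log 2 + a * Real.log (a / s) := by
  rcases eq_or_lt_of_le ha with h | h
  · simp [← h]
  · have : 2 * a / s = 2 * (a / s) := by ring
    rw [this, Real.log_mul (by norm_num) (by positivity)]
    ring

lemma pointwise_key (a b t : ℝ) (ha : 0 ≤ a) (hb : 0 ≤ b) (hab : 0 < a + b)
    (ht0 : 0 < t) (ht1 : t < 1) :
    a * Real.log (1 - t) + b * Real.log t + (a + b) * Real.log 2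
      ≤ a * Real.log (2 * a / (a + b)) + b * Real.log (2 * b / (a + b)) := by
  have h1 := gibbs_aux a (a + b) (1 - t) ha hab (by linarith)
  have h2 := gibbs_aux b (a + b) t hb hab ht0
  have e1 := log2_split a (a + b) ha hab
  have e2 := log2_split b (a + b) hb hab
  nlinarith [h1, h2]

/-- Let `(X, μ)` be a measure space, `p, q : X → ℝ` measurable with `p ≥ 0`, `q ≥ 0`,
`p + q > 0` a.e., `∫ p = ∫ q = 1`, and the JS integrand integrable, where
`JS(p,q) = (1/2) ∫ [p log(2p/(p+q)) + q log(2q/(p+q))] dμ`.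
For every measurable `D : X → ℝ` with `0 < D < 1` a.e. such that `p·log(1−D)` and
`q·log D` are integrable,
`(1/2) ∫ [p·log(1−D) + q·log D] dμ + log 2 ≤ JS(p, q)`. -/
theorem js_divergence_discriminator_lower_bound
    {X : Type*} [MeasurableSpace X] (μ : Measure X)
    (p q : X → ℝ) (hp : Measurable p) (hq : Measurable q)
    (hp0 : ∀ x, 0 ≤ p x) (hq0 : ∀ x, 0 ≤ q x)
    (hpq : ∀ᵐ x ∂μ, 0 < p x + q x)
    (hpInt : ∫ x, p x ∂μ = 1) (hqInt : ∫ x, q x ∂μ = 1)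
    (hJSInt : Integrable (fun x =>
      p x * Real.log (2 * p x / (p x + q x))
        + q x * Real.log (2 * q x / (p x + q x))) μ)
    (JS : ℝ)
    (hJS : JS = (1 / 2) * ∫ x,
      (p x * Real.log (2 * p x / (p x + q x))
        + q x * Real.log (2 * q x / (p x + q x))) ∂μ)
    (D : X → ℝ) (hD : Measurable D)
    (hD01 : ∀ᵐ x ∂μ, 0 < D x ∧ D x < 1)
    (hInt1 : Integrable (fun x => p x * Real.log (1 - D x)) μ)
    (hInt2 : Integrable (fun x => q x * Real.log (D x)) μ) :
    (1 / 2) * (∫ x, (p x * Real.log (1 - D x) + q x * Real.log (D x)) ∂μ)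
      + Real.log 2 ≤ JS := by
  have hpI : Integrable p μ := by
    by_contra h
    rw [integral_undef h] at hpInt
    norm_num at hpInt
  have hqI : Integrable q μ := by
    by_contra h
    rw [integral_undef h] at hqInt
    norm_num at hqInt
  have hgI : Integrable (fun x => p x * Real.log (1 - D x) + q x * Real.log (D x)) μ :=
    hInt1.add hInt2
  have hfI : Integrable (fun x => p x * Real.log (1 - D x) + q x * Real.log (D x)
      + (p x + q x) * Real.log 2) μ :=
    hgI.add ((hpI.add hqI).mul_const _)
  have hmono : ∫ x, (p x * Real.log (1 - D x) + q x * Real.log (D x)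
        + (p x + q x) * Real.log 2) ∂μ
      ≤ ∫ x, (p x * Real.log (2 * p x / (p x + q x))
        + q x * Real.log (2 * q x / (p x + q x))) ∂μ := by
    refine integral_mono_ae hfI hJSInt ?_
    filter_upwards [hpq, hD01] with x hx hxD
    exact pointwise_key (p x) (q x) (D x) (hp0 x) (hq0 x) hx hxD.1 hxD.2
  have hsplit : ∫ x, (p x * Real.log (1 - D x) + q x * Real.log (D x)
        + (p x + q x) * Real.log 2) ∂μ
      = (∫ x, (p x * Real.log (1 - D x) + q x * Real.log (D x)) ∂μ) + 2 * Real.log 2 := by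
    have h2I : Integrable (fun x => (p x + q x) * Real.log 2) μ := (hpI.add hqI).mul_const _
    rw [integral_add hgI h2I, integral_mul_const,
      integral_add hpI hqI, hpInt, hqInt]
    ring
  rw [hsplit] at hmono
  rw [hJS]
  linarith
end

section
/- Assume additionally that p > 0 and q > 0 μ-almost everywhere. For the particular choice D = q/(p+q), one has 0 < D < 1 μ-almost everywhere and (1/2)·∫ [p·log(1−D) + q·log D] dμ + log 2 = JS(p, q); consequently the supremum of (1/2)·∫ [p·log(1−D) + q·log D] dμ + log 2 over all measurable D : X → (0,1) (for which the integrals exist) equals JS(p, q) and is attained at D = q/(p+q). -/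
/-!
For fixed `a, b > 0`, the map `d ↦ a log (1 - d) + b log d` on `(0, 1)` is maximised at
`d = b / (a + b)` (Gibbs' inequality for two-point distributions, via `log x ≤ x - 1`), and its
maximal value is `a log (2a/(a+b)) + b log (2b/(a+b)) - (a + b) log 2`. Integrating against `μ`
and using `∫ p = ∫ q = 1` turns the pointwise bound into the bound on the objective and the
pointwise identity into its value `JS(p, q)` at `D = q/(p+q)`. That this `D` is admissible, i.e.
that the two terms are integrable separately, holds because each summand of the JS integrand is
bounded below by an integrable function, again by `log x ≤ x - 1`.
-/

open MeasureTheory Real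

lemma sub_le_mul_log_div {t s : ℝ} (ht : 0 ≤ t) (hs : 0 < s) : t - s ≤ t * log (t / s) := by
  have h := mul_le_mul_of_nonneg_left (self_sub_one_le_mul_log (div_nonneg ht hs.le)) hs.le
  calc t - s = s * (t / s - 1) := by field_simp
    _ ≤ s * (t / s * log (t / s)) := h
    _ = t * log (t / s) := by field_simp

lemma mul_log_two_mul_div (a : ℝ) {s : ℝ} (hs : s ≠ 0) :
    a * log (2 * a / s) = a * log (a / s) + a * log 2 := by
  rcases eq_or_ne a 0 with rfl | ha
  · simp
  rw [mul_div_assoc, log_mul two_ne_zero (div_ne_zero ha hs)]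
  ring

lemma mul_log_one_sub_add_mul_log_le {a b d : ℝ} (ha : 0 < a) (hb : 0 < b)
    (hd₀ : 0 < d) (hd₁ : d < 1) :
    a * log (1 - d) + b * log d ≤ a * log (a / (a + b)) + b * log (b / (a + b)) := by
  have hab : 0 < a + b := by positivity
  have h1d : 0 < 1 - d := by linarith
  have ha' := sub_le_mul_log_div ha.le (mul_pos hab h1d)
  have hb' := sub_le_mul_log_div hb.le (mul_pos hab hd₀)
  rw [← div_div, log_div (by positivity) h1d.ne'] at ha'
  rw [← div_div, log_div (by positivity) hd₀.ne'] at hb'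
  linarith

lemma mul_log_one_sub_add_mul_log_add_mul_log_two_le {a b d : ℝ} (ha : 0 < a) (hb : 0 < b)
    (hd₀ : 0 < d) (hd₁ : d < 1) :
    a * log (1 - d) + b * log d + (a + b) * log 2
      ≤ a * log (2 * a / (a + b)) + b * log (2 * b / (a + b)) := by
  have hab : a + b ≠ 0 := by positivity
  rw [mul_log_two_mul_div a hab, mul_log_two_mul_div b hab]
  linarith [mul_log_one_sub_add_mul_log_le ha hb hd₀ hd₁]

lemma sub_half_add_le_mul_log_two_mul_div {a b : ℝ} (ha : 0 ≤ a) (hab : 0 < a + b) :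
    a - (a + b) / 2 ≤ a * log (2 * a / (a + b)) := by
  have h := sub_le_mul_log_div ha (half_pos hab)
  rwa [div_div_eq_mul_div, mul_comm a 2] at h

lemma mul_log_one_sub_div_add (a : ℝ) {b : ℝ} (hab : a + b ≠ 0) :
    a * log (1 - b / (a + b)) = a * log (2 * a / (a + b)) - a * log 2 := by
  rw [one_sub_div hab, add_sub_cancel_right, mul_log_two_mul_div a hab]
  ring

section Integral

variable {X : Type*} [MeasurableSpace X] {μ : Measure X}

lemma MeasureTheory.Integrable.summands_of_ae_ge {f g lf lg : X → ℝ}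
    (hfg : Integrable (fun x ↦ f x + g x) μ) (hf : AEStronglyMeasurable f μ)
    (hlf : Integrable lf μ) (hlg : Integrable lg μ)
    (hf_ge : ∀ᵐ x ∂μ, lf x ≤ f x) (hg_ge : ∀ᵐ x ∂μ, lg x ≤ g x) :
    Integrable f μ ∧ Integrable g μ := by
  have hf_int : Integrable f μ := by
    refine integrable_of_le_of_le hf hf_ge ?_ hlf (hfg.sub hlg)
    filter_upwards [hg_ge] with x hx
    simp only [Pi.sub_apply]
    linarith
  exact ⟨hf_int, (hfg.sub hf_int).congr (.of_forall fun x ↦ by simp)⟩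

lemma half_integral_add_log_two {h p q : X → ℝ} (hh : Integrable h μ)
    (hp : ∫ x, p x ∂μ = 1) (hq : ∫ x, q x ∂μ = 1) :
    1 / 2 * ∫ x, h x ∂μ + log 2 = 1 / 2 * ∫ x, (h x + (p x + q x) * log 2) ∂μ := by
  have hp_int : Integrable p μ := .of_integral_ne_zero (by simp [hp])
  have hq_int : Integrable q μ := .of_integral_ne_zero (by simp [hq])
  rw [integral_add hh ((hp_int.fun_add hq_int).mul_const _), integral_mul_const,
    integral_add hp_int hq_int, hp, hq]
  ring

lemma integrable_mul_log_optimal_discriminator {p q : X → ℝ}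
    (hp : Measurable p) (hq : Measurable q)
    (hp_pos : ∀ᵐ x ∂μ, 0 < p x) (hq_pos : ∀ᵐ x ∂μ, 0 < q x)
    (hp_int : Integrable p μ) (hq_int : Integrable q μ)
    (hJS : Integrable (fun x ↦ p x * log (2 * p x / (p x + q x))
      + q x * log (2 * q x / (p x + q x))) μ) :
    Integrable (fun x ↦ p x * log (1 - q x / (p x + q x))) μ
      ∧ Integrable (fun x ↦ q x * log (q x / (p x + q x))) μ := by
  have hpq_int : Integrable (fun x ↦ (p x + q x) / 2) μ := (hp_int.add hq_int).div_const 2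
  obtain ⟨hP, hQ⟩ := hJS.summands_of_ae_ge
    (f := fun x ↦ p x * log (2 * p x / (p x + q x)))
    (by fun_prop : Measurable _).aestronglyMeasurable
    (lf := fun x ↦ p x - (p x + q x) / 2) (lg := fun x ↦ q x - (p x + q x) / 2)
    (hp_int.sub hpq_int) (hq_int.sub hpq_int)
    (by filter_upwards [hp_pos, hq_pos] with x hpx hqx
        exact sub_half_add_le_mul_log_two_mul_div hpx.le (by positivity))
    (by filter_upwards [hp_pos, hq_pos] with x hpx hqx
        rw [add_comm (p x)]
        exact sub_half_add_le_mul_log_two_mul_div hqx.le (by positivity))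
  have hpq : ∀ᵐ x ∂μ, p x + q x ≠ 0 := by
    filter_upwards [hp_pos, hq_pos] with x hpx hqx
    positivity
  constructor
  · refine (hP.sub (hp_int.mul_const (log 2))).congr ?_
    filter_upwards [hpq] with x hx
    simp only [Pi.sub_apply, mul_log_one_sub_div_add _ hx]
  · refine (hQ.sub (hq_int.mul_const (log 2))).congr ?_
    filter_upwards [hpq] with x hx
    simp only [Pi.sub_apply, mul_log_two_mul_div _ hx]
    ring

end Integral

theorem js_divergence_optimal_discriminator_general
    {X : Type*} [MeasurableSpace X] (μ : Measure X)
    (p q : X → ℝ) (hp : Measurable p) (hq : Measurable q)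
    (hppos : ∀ᵐ x ∂μ, 0 < p x) (hqpos : ∀ᵐ x ∂μ, 0 < q x)
    (hpInt : ∫ x, p x ∂μ = 1) (hqInt : ∫ x, q x ∂μ = 1)
    (hJSInt : Integrable (fun x =>
      p x * Real.log (2 * p x / (p x + q x))
        + q x * Real.log (2 * q x / (p x + q x))) μ)
    (JS : ℝ)
    (hJS : JS = (1 / 2) * ∫ x,
      (p x * Real.log (2 * p x / (p x + q x))
        + q x * Real.log (2 * q x / (p x + q x))) ∂μ) :
    (∀ᵐ x ∂μ, 0 < q x / (p x + q x) ∧ q x / (p x + q x) < 1)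
    ∧ (1 / 2) * (∫ x, (p x * Real.log (1 - q x / (p x + q x))
          + q x * Real.log (q x / (p x + q x))) ∂μ) + Real.log 2 = JS
    ∧ IsGreatest {v : ℝ | ∃ D : X → ℝ, Measurable D
          ∧ (∀ᵐ x ∂μ, 0 < D x ∧ D x < 1)
          ∧ Integrable (fun x => p x * Real.log (1 - D x)) μ
          ∧ Integrable (fun x => q x * Real.log (D x)) μ
          ∧ v = (1 / 2) * (∫ x, (p x * Real.log (1 - D x) + q x * Real.log (D x)) ∂μ)
              + Real.log 2} JS := by
  have hp_int : Integrable p μ := .of_integral_ne_zero (by simp [hpInt])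
  have hq_int : Integrable q μ := .of_integral_ne_zero (by simp [hqInt])
  obtain ⟨hP, hQ⟩ :=
    integrable_mul_log_optimal_discriminator hp hq hppos hqpos hp_int hq_int hJSInt
  have hD₀ : ∀ᵐ x ∂μ, 0 < q x / (p x + q x) ∧ q x / (p x + q x) < 1 := by
    filter_upwards [hppos, hqpos] with x hpx hqx
    exact ⟨by positivity, (div_lt_one (by positivity)).2 (by linarith)⟩
  have hvalue : (1 / 2) * (∫ x, (p x * log (1 - q x / (p x + q x))
      + q x * log (q x / (p x + q x))) ∂μ) + log 2 = JS := by
    rw [half_integral_add_log_two (hP.fun_add hQ) hpInt hqInt, hJS]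
    congr 1
    refine integral_congr_ae ?_
    filter_upwards [hppos, hqpos] with x hpx hqx
    have hx : p x + q x ≠ 0 := by positivity
    simp only [mul_log_one_sub_div_add _ hx, mul_log_two_mul_div _ hx]
    ring
  refine ⟨hD₀, hvalue, ⟨_, hq.div (hp.add hq), hD₀, hP, hQ, hvalue.symm⟩, ?_⟩
  rintro v ⟨D, -, hD, hPD, hQD, rfl⟩
  rw [half_integral_add_log_two (hPD.fun_add hQD) hpInt hqInt, hJS]
  refine mul_le_mul_of_nonneg_left (integral_mono_ae ((hPD.fun_add hQD).fun_add
    ((hp_int.add hq_int).mul_const _)) hJSInt ?_) (by norm_num)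
  filter_upwards [hppos, hqpos, hD] with x hpx hqx hDx
  exact mul_log_one_sub_add_mul_log_add_mul_log_two_le hpx hqx hDx.1 hDx.2

/-- Let `(X, μ)` be a measure space, `p, q : X → ℝ` measurable with `p ≥ 0`, `q ≥ 0`,
`p + q > 0` a.e., `∫ p = ∫ q = 1`, the JS integrand integrable, and additionally `p > 0`
and `q > 0` a.e.  For the particular choice `D = q/(p+q)`, one has `0 < D < 1` a.e. and
`(1/2) ∫ [p·log(1−D) + q·log D] dμ + log 2 = JS(p, q)`; consequently the supremum of
`(1/2) ∫ [p·log(1−D) + q·log D] dμ + log 2` over all measurable `D : X → (0,1)` (for which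
the integrals exist) equals `JS(p, q)` and is attained at `D = q/(p+q)`. -/
theorem js_divergence_optimal_discriminator
    {X : Type*} [MeasurableSpace X] (μ : Measure X)
    (p q : X → ℝ) (hp : Measurable p) (hq : Measurable q)
    (hp0 : ∀ x, 0 ≤ p x) (hq0 : ∀ x, 0 ≤ q x)
    (hpq : ∀ᵐ x ∂μ, 0 < p x + q x)
    (hppos : ∀ᵐ x ∂μ, 0 < p x) (hqpos : ∀ᵐ x ∂μ, 0 < q x)
    (hpInt : ∫ x, p x ∂μ = 1) (hqInt : ∫ x, q x ∂μ = 1)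
    (hJSInt : Integrable (fun x =>
      p x * Real.log (2 * p x / (p x + q x))
        + q x * Real.log (2 * q x / (p x + q x))) μ)
    (JS : ℝ)
    (hJS : JS = (1 / 2) * ∫ x,
      (p x * Real.log (2 * p x / (p x + q x))
        + q x * Real.log (2 * q x / (p x + q x))) ∂μ) :
    (∀ᵐ x ∂μ, 0 < q x / (p x + q x) ∧ q x / (p x + q x) < 1)
    ∧ (1 / 2) * (∫ x, (p x * Real.log (1 - q x / (p x + q x))
          + q x * Real.log (q x / (p x + q x))) ∂μ) + Real.log 2 = JS
    ∧ IsGreatest {v : ℝ | ∃ D : X → ℝ, Measurable D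
          ∧ (∀ᵐ x ∂μ, 0 < D x ∧ D x < 1)
          ∧ Integrable (fun x => p x * Real.log (1 - D x)) μ
          ∧ Integrable (fun x => q x * Real.log (D x)) μ
          ∧ v = (1 / 2) * (∫ x, (p x * Real.log (1 - D x) + q x * Real.log (D x)) ∂μ)
              + Real.log 2} JS :=
  js_divergence_optimal_discriminator_general μ p q hp hq hppos hqpos hpInt hqInt hJSInt JS hJS
end

section
/- For every real t with t < log 2, the convex conjugate of h satisfies sup_{z > 0} ( t·z − h(z) ) = −log(2 − e^t), and the supremum is attained at z = e^t/(2 − e^t). -/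
/-!
Put `a = eᵗ`, `p = z/(1+z)` and `q = 1/(1+z)`. Then `t z − h(z) + log(2 − a)` equals
`(1+z) (p log(a/(2p)) + q log((2−a)/(2q)))`, and since `a/2 + (2−a)/2 = 1` the bracket is `≤ 0`
by Gibbs' inequality (here: `log x ≤ x − 1` applied to both terms), with equality exactly when
`p = a/2`, i.e. at `z = a/(2−a)`.
-/

open Real

noncomputable def hFun (z : ℝ) : ℝ := log (2 / (1 + z)) + z * log (2 * z / (1 + z))

lemma mul_log_div_le_sub {x u : ℝ} (hx : 0 < x) (hu : 0 < u) : x * log (u / x) ≤ u - x :=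
  calc x * log (u / x) ≤ x * (u / x - 1) :=
        mul_le_mul_of_nonneg_left (log_le_sub_one_of_pos (div_pos hu hx)) hx.le
    _ = u - x := by field_simp

section

variable {a z : ℝ} (ha : 0 < a) (ha2 : a < 2)
include ha ha2

lemma log_mul_sub_hFun_add_log (hz : 0 < z) :
    log a * z - hFun z + log (2 - a)
      = z * log (a * (1 + z) / 2 / z) + log ((2 - a) * (1 + z) / 2) := by
  have h1z : 0 < 1 + z := by linarith
  have h2a : 0 < 2 - a := by linarith
  simp only [hFun]
  rw [log_div (by positivity) hz.ne', log_div (by positivity) two_ne_zero,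
    log_div (by positivity) two_ne_zero, log_mul ha.ne' h1z.ne', log_mul h2a.ne' h1z.ne',
    log_div two_ne_zero h1z.ne', log_div (by positivity) h1z.ne', log_mul two_ne_zero hz.ne']
  ring

lemma log_mul_sub_hFun_le (hz : 0 < z) : log a * z - hFun z ≤ -log (2 - a) := by
  have h2a : 0 < 2 - a := by linarith
  have key := log_mul_sub_hFun_add_log ha ha2 hz
  have first := mul_log_div_le_sub hz (show 0 < a * (1 + z) / 2 by positivity)
  have second := mul_log_div_le_sub one_pos (show 0 < (2 - a) * (1 + z) / 2 by positivity)
  rw [one_mul, div_one] at second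
  linarith

lemma log_mul_sub_hFun_optimum : log a * (a / (2 - a)) - hFun (a / (2 - a)) = -log (2 - a) := by
  have h2a : 0 < 2 - a := by linarith
  have key := log_mul_sub_hFun_add_log ha ha2 (div_pos ha h2a)
  have first : a * (1 + a / (2 - a)) / 2 / (a / (2 - a)) = 1 := by field_simp; ring
  have second : (2 - a) * (1 + a / (2 - a)) / 2 = 1 := by field_simp; ring
  rw [first, second, log_one, mul_zero, add_zero] at key
  linarith

end

/-- For `h(z) = log(2/(1+z)) + z·log(2z/(1+z))` and every real `t < log 2`, the convex
conjugate of `h` satisfies `sup_{z > 0} (t·z − h(z)) = −log(2 − eᵗ)`, the supremum being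
attained at `z = eᵗ/(2 − eᵗ)`. -/
theorem h_convex_conjugate (h : ℝ → ℝ)
    (hh : ∀ z : ℝ, 0 < z →
      h z = Real.log (2 / (1 + z)) + z * Real.log (2 * z / (1 + z))) :
    ∀ t : ℝ, t < Real.log 2 →
      IsGreatest {v : ℝ | ∃ z : ℝ, 0 < z ∧ v = t * z - h z}
          (-Real.log (2 - Real.exp t))
      ∧ 0 < Real.exp t / (2 - Real.exp t)
      ∧ t * (Real.exp t / (2 - Real.exp t)) - h (Real.exp t / (2 - Real.exp t))
          = -Real.log (2 - Real.exp t) := by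
  intro t ht
  have ha : 0 < exp t := exp_pos t
  have ha2 : exp t < 2 := by simpa [exp_log two_pos] using exp_lt_exp.mpr ht
  have hz₀ : 0 < exp t / (2 - exp t) := div_pos ha (by linarith)
  have hh' : ∀ z, 0 < z → h z = hFun z := hh
  have optimum := log_mul_sub_hFun_optimum ha ha2
  rw [log_exp, ← hh' _ hz₀] at optimum
  refine ⟨⟨⟨_, hz₀, optimum.symm⟩, ?_⟩, hz₀, optimum⟩
  rintro v ⟨z, hz, rfl⟩
  simpa [log_exp, hh' z hz] using log_mul_sub_hFun_le ha ha2 hz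
end

section
/- For every z > 0, h(z) = sup_{t < log 2} ( t·z + log(2 − e^t) ), and the supremum is attained at t = log(2z/(1+z)). -/
/-- For `h(z) = log(2/(1+z)) + z·log(2z/(1+z))` and every `z > 0`,
`h(z) = sup_{t < log 2} (t·z + log(2 − eᵗ))`, the supremum being attained at
`t = log(2z/(1+z))`. -/
theorem h_biconjugate (h : ℝ → ℝ)
    (hh : ∀ z : ℝ, 0 < z →
      h z = Real.log (2 / (1 + z)) + z * Real.log (2 * z / (1 + z))) :
    ∀ z : ℝ, 0 < z →
      IsGreatest {v : ℝ | ∃ t : ℝ, t < Real.log 2 ∧ v = t * z + Real.log (2 - Real.exp t)}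
          (h z)
      ∧ Real.log (2 * z / (1 + z)) < Real.log 2
      ∧ Real.log (2 * z / (1 + z)) * z
          + Real.log (2 - Real.exp (Real.log (2 * z / (1 + z)))) = h z := by
  intro z hz
  have h1z : (0:ℝ) < 1 + z := by linarith
  have hw : (0:ℝ) < 2 * z / (1 + z) := by positivity
  have hwlt : 2 * z / (1 + z) < 2 := by
    rw [div_lt_iff₀ h1z]; linarith
  have ht0 : Real.log (2 * z / (1 + z)) < Real.log 2 := Real.log_lt_log hw hwlt
  have hexp : Real.exp (Real.log (2 * z / (1 + z))) = 2 * z / (1 + z) := Real.exp_log hw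
  have hval : Real.log (2 * z / (1 + z)) * z
      + Real.log (2 - Real.exp (Real.log (2 * z / (1 + z)))) = h z := by
    rw [hexp, hh z hz]
    have h2 : (2:ℝ) - 2 * z / (1 + z) = 2 / (1 + z) := by field_simp; ring
    rw [h2]; ring
  refine ⟨⟨⟨_, ht0, hval.symm⟩, ?_⟩, ht0, hval⟩
  rintro v ⟨t, ht, rfl⟩
  rw [hh z hz]
  set u := Real.exp t with hu
  have hu0 : 0 < u := Real.exp_pos t
  have hu2 : u < 2 := by
    have := Real.exp_lt_exp.mpr ht
    rwa [Real.exp_log (by norm_num : (0:ℝ) < 2)] at this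
  have h2u : 0 < 2 - u := by linarith
  have htlog : t = Real.log u := (Real.log_exp t).symm
  have ha : Real.log u - Real.log (2 * z / (1 + z)) ≤ u * (1 + z) / (2 * z) - 1 := by
    have h1 : u * (1 + z) / (2 * z) = u / (2 * z / (1 + z)) := by
      field_simp
    have := Real.log_le_sub_one_of_pos (show 0 < u / (2 * z / (1 + z)) by positivity)
    rw [Real.log_div (ne_of_gt hu0) (ne_of_gt hw)] at this
    linarith [this, h1 ▸ this]
  have hb : Real.log (2 - u) - Real.log (2 / (1 + z)) ≤ (2 - u) * (1 + z) / 2 - 1 := by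
    have h1 : (2 - u) * (1 + z) / 2 = (2 - u) / (2 / (1 + z)) := by
      field_simp
    have := Real.log_le_sub_one_of_pos (show 0 < (2 - u) / (2 / (1 + z)) by positivity)
    rw [Real.log_div (ne_of_gt h2u) (ne_of_gt (show (0:ℝ) < 2 / (1 + z) by positivity))] at this
    linarith [h1 ▸ this]
  have key : z * (u * (1 + z) / (2 * z) - 1) + ((2 - u) * (1 + z) / 2 - 1) = 0 := by
    field_simp; ring
  have ha' := mul_le_mul_of_nonneg_left ha hz.le
  rw [htlog]
  nlinarith [ha', hb, key]
end
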